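/- arXiv:1706.07517 — 2 statements merged into one kernel-verified Lean document; each statement's English description precedes it below -/
import Mathlib

section
/- If f, g : ℝ^n → ℝ are both log-subharmonic, then f + g is log-subharmonic. -/
open MeasureTheory Real

/-- The Euclidean Laplacian on `ℝ^n`: `Δ f x = ∑ i ∂²f/∂xᵢ² (x)`. -/
noncomputable def lap {n : ℕ} (f : EuclideanSpace ℝ (Fin n) → ℝ) (x : EuclideanSpace ℝ (Fin n)) : ℝ :=
  ∑ i, fderiv ℝ (fun y => fderiv ℝ f y (EuclideanSpace.single i 1)) x (EuclideanSpace.single i 1)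

/-- `f : ℝ^n → ℝ` is log-subharmonic: `f` is `C²`, `f > 0` everywhere, and
`Δ (log f) ≥ 0` pointwise. -/
def IsLSH {n : ℕ} (f : EuclideanSpace ℝ (Fin n) → ℝ) : Prop :=
  ContDiff ℝ 2 f ∧ (∀ x, 0 < f x) ∧ ∀ x, 0 ≤ lap (fun y => Real.log (f y)) x

section Aux

variable {n : ℕ}

lemma hasFDerivAt_dirDeriv (h : EuclideanSpace ℝ (Fin n) → ℝ) (hh : ContDiff ℝ 2 h)
    (x v : EuclideanSpace ℝ (Fin n)) :
    HasFDerivAt (fun y => fderiv ℝ h y v) ((fderiv ℝ (fderiv ℝ h) x).flip v) x := by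
  have hL : ContDiff ℝ 1 (fderiv ℝ h) := hh.fderiv_right (by norm_num)
  have hLd : Differentiable ℝ (fderiv ℝ h) := hL.differentiable (by norm_num)
  have := (hLd x).hasFDerivAt.clm_apply (hasFDerivAt_const v x)
  simpa using this

lemma second_log (h : EuclideanSpace ℝ (Fin n) → ℝ) (hh : ContDiff ℝ 2 h)
    (hp : ∀ x, 0 < h x) (x v : EuclideanSpace ℝ (Fin n)) :
    fderiv ℝ (fun y => fderiv ℝ (fun z => Real.log (h z)) y v) x v
      = (fderiv ℝ (fun y => fderiv ℝ h y v) x v * h x - (fderiv ℝ h x v) ^ 2) / (h x) ^ 2 := by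
  have hd : Differentiable ℝ h := hh.differentiable (by norm_num)
  have e1 : (fun y => fderiv ℝ (fun z => Real.log (h z)) y v)
      = fun y => (h y)⁻¹ * fderiv ℝ h y v := by
    funext y
    rw [((hd y).hasFDerivAt.log (hp y).ne').fderiv]
    simp
  have happ := hasFDerivAt_dirDeriv h hh x v
  have hinv : HasFDerivAt (fun y => (h y)⁻¹)
      ((-(h x ^ 2)⁻¹) • fderiv ℝ h x) x :=
    (hasDerivAt_inv (hp x).ne').comp_hasFDerivAt x (hd x).hasFDerivAt
  have hmul : HasFDerivAt (fun y => (h y)⁻¹ * fderiv ℝ h y v) _ x := hinv.mul happ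
  rw [e1, hmul.fderiv, happ.fderiv]
  simp only [ContinuousLinearMap.add_apply, ContinuousLinearMap.smul_apply,
    ContinuousLinearMap.flip_apply, smul_eq_mul]
  have hx0 : h x ≠ 0 := (hp x).ne'
  field_simp
  ring

lemma lap_log_nonneg_iff (h : EuclideanSpace ℝ (Fin n) → ℝ) (hh : ContDiff ℝ 2 h)
    (hp : ∀ x, 0 < h x) (x : EuclideanSpace ℝ (Fin n)) :
    0 ≤ lap (fun y => Real.log (h y)) x ↔
      ∑ i, (fderiv ℝ h x (EuclideanSpace.single i 1)) ^ 2
        ≤ h x * ∑ i, fderiv ℝ (fun y => fderiv ℝ h y (EuclideanSpace.single i 1)) x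
            (EuclideanSpace.single i 1) := by
  unfold lap
  rw [Finset.sum_congr rfl (fun i _ => second_log h hh hp x _), ← Finset.sum_div,
    le_div_iff₀ (pow_pos (hp x) 2), zero_mul, Finset.sum_sub_distrib,
    ← Finset.sum_mul, sub_nonneg, mul_comm]

end Aux

/-- The sum of two log-subharmonic functions on `ℝ^n` is log-subharmonic. -/
theorem stmt_2 {n : ℕ} (hn : 1 ≤ n) (f g : EuclideanSpace ℝ (Fin n) → ℝ)
    (hf : IsLSH f) (hg : IsLSH g) : IsLSH (f + g) := by
  obtain ⟨hfC, hfp, hfl⟩ := hf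
  obtain ⟨hgC, hgp, hgl⟩ := hg
  have hC : ContDiff ℝ 2 (f + g) := hfC.add hgC
  have hp : ∀ x, 0 < (f + g) x := fun x => add_pos (hfp x) (hgp x)
  refine ⟨hC, hp, fun x => ?_⟩
  have hdf : Differentiable ℝ f := hfC.differentiable (by norm_num)
  have hdg : Differentiable ℝ g := hgC.differentiable (by norm_num)
  rw [lap_log_nonneg_iff (f + g) hC hp x]
  have hP := (lap_log_nonneg_iff f hfC hfp x).mp (hfl x)
  have hQ := (lap_log_nonneg_iff g hgC hgp x).mp (hgl x)
  set b : Fin n → ℝ := fun i => fderiv ℝ f x (EuclideanSpace.single i 1) with hb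
  set d : Fin n → ℝ := fun i => fderiv ℝ g x (EuclideanSpace.single i 1) with hd
  -- first derivatives add
  have e1 : ∀ i : Fin n, fderiv ℝ (f + g) x (EuclideanSpace.single i 1) = b i + d i := by
    intro i
    have : HasFDerivAt (f + g) (fderiv ℝ f x + fderiv ℝ g x) x :=
      (hdf x).hasFDerivAt.add (hdg x).hasFDerivAt
    rw [this.fderiv]; simp [hb, hd]
  -- second derivatives add
  have e2 : ∀ i : Fin n, fderiv ℝ (fun y => fderiv ℝ (f + g) y (EuclideanSpace.single i 1)) x
      (EuclideanSpace.single i 1)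
      = fderiv ℝ (fun y => fderiv ℝ f y (EuclideanSpace.single i 1)) x (EuclideanSpace.single i 1)
        + fderiv ℝ (fun y => fderiv ℝ g y (EuclideanSpace.single i 1)) x
            (EuclideanSpace.single i 1) := by
    intro i
    set v := EuclideanSpace.single i (1:ℝ)
    have efun : (fun y => fderiv ℝ (f + g) y v) = fun y => fderiv ℝ f y v + fderiv ℝ g y v := by
      funext y
      have : HasFDerivAt (f + g) (fderiv ℝ f y + fderiv ℝ g y) y :=
        (hdf y).hasFDerivAt.add (hdg y).hasFDerivAt
      rw [this.fderiv]; simp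
    have hsum : HasFDerivAt (fun y => fderiv ℝ f y v + fderiv ℝ g y v) _ x :=
      (hasFDerivAt_dirDeriv f hfC x v).add (hasFDerivAt_dirDeriv g hgC x v)
    rw [efun, hsum.fderiv, (hasFDerivAt_dirDeriv f hfC x v).fderiv,
      (hasFDerivAt_dirDeriv g hgC x v).fderiv]
    simp
  simp only [e1, e2]
  rw [Finset.sum_add_distrib]
  set A : ℝ := ∑ i, fderiv ℝ (fun y => fderiv ℝ f y (EuclideanSpace.single i 1)) x
      (EuclideanSpace.single i 1) with hA
  set C : ℝ := ∑ i, fderiv ℝ (fun y => fderiv ℝ g y (EuclideanSpace.single i 1)) x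
      (EuclideanSpace.single i 1) with hC'
  have hfx : 0 < f x := hfp x
  have hgx : 0 < g x := hgp x
  have hfg : (f + g) x = f x + g x := rfl
  rw [hfg]
  -- key Cauchy-Schwarz type inequality
  have key : (f x * g x) * ∑ i, (b i + d i) ^ 2
      ≤ (f x + g x) * (g x * ∑ i, (b i) ^ 2 + f x * ∑ i, (d i) ^ 2) := by
    calc (f x * g x) * ∑ i, (b i + d i) ^ 2 = ∑ i, f x * g x * (b i + d i) ^ 2 := by
          rw [Finset.mul_sum]
      _ ≤ ∑ i, (f x + g x) * (g x * (b i) ^ 2 + f x * (d i) ^ 2) :=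
          Finset.sum_le_sum (fun i _ => by nlinarith [sq_nonneg (f x * d i - g x * b i)])
      _ = (f x + g x) * (g x * ∑ i, (b i) ^ 2 + f x * ∑ i, (d i) ^ 2) := by
          rw [← Finset.mul_sum, Finset.sum_add_distrib, ← Finset.mul_sum, ← Finset.mul_sum]
  have h2 : (f x + g x) * (g x * ∑ i, (b i) ^ 2 + f x * ∑ i, (d i) ^ 2)
      ≤ (f x + g x) * (g x * (f x * A) + f x * (g x * C)) := by
    have := add_le_add (mul_le_mul_of_nonneg_left hP hgx.le) (mul_le_mul_of_nonneg_left hQ hfx.le)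
    exact mul_le_mul_of_nonneg_left this (by positivity)
  have h3 : (f x * g x) * ∑ i, (b i + d i) ^ 2 ≤ (f x * g x) * ((f x + g x) * (A + C)) := by
    nlinarith [key, h2]
  exact le_of_mul_le_mul_left h3 (mul_pos hfx hgx)
end

section
/- Let f : ℝ^n → ℝ be log-subharmonic and let φ : ℝ^n → ℝ be C^∞, compactly supported, nonnegative, with ∫ φ(x) dx = 1. Then the convolution φ ∗ f, defined by (φ ∗ f)(x) = ∫ φ(y) f(x − y) dy, is log-subharmonic. -/
open MeasureTheory Real

set_option synthInstance.maxHeartbeats 1000000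
set_option maxHeartbeats 1000000

/-- The convolution `(φ ∗ f)(x) = ∫ φ(y) f(x − y) dy` (with respect to Lebesgue measure). -/
noncomputable def conv {n : ℕ} (φ f : EuclideanSpace ℝ (Fin n) → ℝ)
    (x : EuclideanSpace ℝ (Fin n)) : ℝ :=
  ∫ y, φ y * f (x - y)

section Aux

variable {n : ℕ}

local notation "E" => EuclideanSpace ℝ (Fin n)

lemma integrable_aux {φ h : E → ℝ} (hφc : Continuous φ) (hφs : HasCompactSupport φ)
    (hc : Continuous h) (x : E) :
    Integrable (fun y => φ y * h (x - y)) := by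
  apply Continuous.integrable_of_hasCompactSupport
  · exact hφc.mul (hc.comp (continuous_const.sub continuous_id))
  · exact hφs.mul_right

lemma integrable_smul_aux {F : Type*} [NormedAddCommGroup F] [NormedSpace ℝ F]
    {φ : E → ℝ} {h : E → F} (hφc : Continuous φ) (hφs : HasCompactSupport φ)
    (hc : Continuous h) (x : E) :
    Integrable (fun y => φ y • h (x - y)) := by
  apply Continuous.integrable_of_hasCompactSupport
  · exact hφc.smul (hc.comp (continuous_const.sub continuous_id))
  · exact hφs.smul_right

lemma contDiff_one_dir {f : E → ℝ} (hf : ContDiff ℝ 2 f) (v : E) :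
    ContDiff ℝ 1 (fun z => fderiv ℝ f z v) :=
  (hf.fderiv_right (by norm_num)).clm_apply contDiff_const

lemma continuous_second_dir {f : E → ℝ} (hf : ContDiff ℝ 2 f) (v w : E) :
    Continuous (fun z => fderiv ℝ (fun u => fderiv ℝ f u v) z w) :=
  (((contDiff_one_dir hf v).fderiv_right (m := 0) (by norm_num)).clm_apply contDiff_const).continuous

lemma continuous_lap {f : E → ℝ} (hf : ContDiff ℝ 2 f) : Continuous (lap f) := by
  unfold lap
  exact continuous_finset_sum _ fun i _ => continuous_second_dir hf _ _

lemma hasFDerivAt_conv {φ f : E → ℝ} (hφc : Continuous φ) (hφs : HasCompactSupport φ)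
    (hf : ContDiff ℝ 1 f) (x₀ : E) :
    HasFDerivAt (conv φ f) (∫ y, φ y • fderiv ℝ f (x₀ - y)) x₀ := by
  have hfd : Continuous (fderiv ℝ f) := hf.continuous_fderiv (by norm_num)
  -- bound for the derivative on a ball
  have hKc : IsCompact ((fun p : E × E => p.1 - p.2) ''
      (Metric.closedBall x₀ 1 ×ˢ tsupport φ)) :=
    ((isCompact_closedBall x₀ 1).prod hφs).image (continuous_fst.sub continuous_snd)
  obtain ⟨C, hC⟩ := hKc.exists_bound_of_continuousOn hfd.continuousOn
  have key : HasFDerivAt (fun x => ∫ y, φ y * f (x - y))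
      (∫ y, φ y • fderiv ℝ f (x₀ - y)) x₀ := by
    apply hasFDerivAt_integral_of_dominated_of_fderiv_le
      (F' := fun x y => φ y • fderiv ℝ f (x - y)) (bound := fun y => ‖φ y‖ * ‖C‖)
      (Metric.ball_mem_nhds x₀ one_pos)
    · filter_upwards with x
      exact (hφc.mul (hf.continuous.comp (continuous_const.sub continuous_id))).aestronglyMeasurable
    · exact integrable_aux hφc hφs hf.continuous x₀
    · exact (hφc.smul (hfd.comp (continuous_const.sub continuous_id))).aestronglyMeasurable
    · filter_upwards with y x hx
      refine (norm_smul_le (φ y) (fderiv ℝ f (x - y))).trans ?_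
      by_cases hy : y ∈ tsupport φ
      · apply mul_le_mul_of_nonneg_left _ (norm_nonneg _)
        refine le_trans (hC _ ⟨(x, y), ⟨Metric.ball_subset_closedBall hx, hy⟩, rfl⟩) ?_
        exact le_abs_self C
      · simp [image_eq_zero_of_notMem_tsupport hy]
    · exact ((hφc.norm.mul continuous_const).integrable_of_hasCompactSupport
        hφs.norm.mul_right)
    · filter_upwards with y x hx
      have h1 : HasFDerivAt (fun x : E => x - y) (ContinuousLinearMap.id ℝ E) x :=
        (hasFDerivAt_id x).sub_const y
      have h2 : HasFDerivAt f (fderiv ℝ f (x - y)) (x - y) :=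
        (hf.differentiable (by norm_num) _).hasFDerivAt
      have h3 := (h2.comp x h1).const_mul (φ y)
      simpa using h3
  exact key

lemma fderiv_conv_apply {φ f : E → ℝ} (hφc : Continuous φ) (hφs : HasCompactSupport φ)
    (hf : ContDiff ℝ 1 f) (x v : E) :
    fderiv ℝ (conv φ f) x v = ∫ y, φ y * fderiv ℝ f (x - y) v := by
  rw [(hasFDerivAt_conv hφc hφs hf x).fderiv]
  rw [ContinuousLinearMap.integral_apply (integrable_smul_aux hφc hφs (hf.continuous_fderiv (by norm_num)) x) v]
  simp [smul_eq_mul]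

lemma lap_conv {φ f : E → ℝ} (hφc : Continuous φ) (hφs : HasCompactSupport φ)
    (hf : ContDiff ℝ 2 f) (x : E) :
    lap (conv φ f) x = ∫ y, φ y * lap f (x - y) := by
  have key : ∀ v : E, fderiv ℝ (fun y => fderiv ℝ (conv φ f) y v) x v
      = ∫ y, φ y * fderiv ℝ (fun z => fderiv ℝ f z v) (x - y) v := by
    intro v
    have h1 : (fun y => fderiv ℝ (conv φ f) y v)
        = conv φ (fun z => fderiv ℝ f z v) := by
      funext y
      rw [fderiv_conv_apply hφc hφs (hf.of_le one_le_two) y v]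
      rfl
    rw [h1, fderiv_conv_apply hφc hφs (contDiff_one_dir hf v) x v]
  unfold lap
  rw [Finset.sum_congr rfl (fun i _ => key _)]
  rw [← integral_finset_sum]
  · congr 1
    funext y
    rw [Finset.mul_sum]
  · intro i _
    exact integrable_aux hφc hφs (continuous_second_dir hf _ _) x

lemma lap_log {g : E → ℝ} (hg : ContDiff ℝ 2 g) (hgpos : ∀ x, 0 < g x) (x : E) :
    lap (fun y => Real.log (g y)) x
      = lap g x / g x
        - (∑ i, (fderiv ℝ g x (EuclideanSpace.single i 1)) ^ 2) / (g x) ^ 2 := by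
  have hgd : Differentiable ℝ g := hg.differentiable (by norm_num)
  have hlog : ∀ y : E, fderiv ℝ (fun z => Real.log (g z)) y = (g y)⁻¹ • fderiv ℝ g y :=
    fun y => ((hgd y).hasFDerivAt.log (hgpos y).ne').fderiv
  have key : ∀ v : E, fderiv ℝ (fun y => fderiv ℝ (fun z => Real.log (g z)) y v) x v
      = fderiv ℝ (fun z => fderiv ℝ g z v) x v / g x - (fderiv ℝ g x v) ^ 2 / (g x) ^ 2 := by
    intro v
    have heq : (fun y => fderiv ℝ (fun z => Real.log (g z)) y v)
        = fun y => (g y)⁻¹ * fderiv ℝ g y v := by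
      funext y; rw [hlog y]; rfl
    rw [heq]
    have h1 : HasFDerivAt (fun y : E => (g y)⁻¹)
        ((-((g x) ^ 2)⁻¹) • fderiv ℝ g x) x :=
      (hasDerivAt_inv (hgpos x).ne').comp_hasFDerivAt x (hgd x).hasFDerivAt
    have h2 : HasFDerivAt (fun y => fderiv ℝ g y v)
        (fderiv ℝ (fun y => fderiv ℝ g y v) x) x :=
      ((contDiff_one_dir hg v).differentiable (by norm_num) x).hasFDerivAt
    have h3 : HasFDerivAt (fun y => (g y)⁻¹ * fderiv ℝ g y v) _ x := h1.mul h2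
    rw [h3.fderiv]
    have hne : g x ≠ 0 := (hgpos x).ne'
    simp only [ContinuousLinearMap.add_apply, ContinuousLinearMap.coe_smul',
      Pi.smul_apply, smul_eq_mul]
    field_simp
    ring
  unfold lap
  rw [Finset.sum_congr rfl (fun i _ => key _)]
  rw [Finset.sum_sub_distrib, ← Finset.sum_div, ← Finset.sum_div]

lemma conv_pos {φ f : E → ℝ} (hφc : Continuous φ) (hφs : HasCompactSupport φ)
    (hφpos : ∀ x, 0 ≤ φ x) (hφint : ∫ x, φ x = 1)
    (hfc : Continuous f) (hfpos : ∀ x, 0 < f x) (x : E) :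
    0 < conv φ f x := by
  have hint := integrable_aux hφc hφs hfc x
  rw [conv, integral_pos_iff_support_of_nonneg
    (fun y => mul_nonneg (hφpos y) (hfpos _).le) hint]
  obtain ⟨y₀, hy₀⟩ : ∃ y₀, φ y₀ ≠ 0 := by
    by_contra h
    push_neg at h
    simp [h] at hφint
  have hopen : IsOpen {y : E | 0 < φ y * f (x - y)} :=
    isOpen_lt continuous_const (hφc.mul (hfc.comp (continuous_const.sub continuous_id)))
  have hne : {y : E | 0 < φ y * f (x - y)}.Nonempty :=
    ⟨y₀, mul_pos (lt_of_le_of_ne (hφpos y₀) (Ne.symm hy₀)) (hfpos _)⟩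
  refine lt_of_lt_of_le (hopen.measure_pos volume hne) (measure_mono ?_)
  intro y hy
  exact ne_of_gt hy

lemma cs_aux {φ f d : E → ℝ} (hφc : Continuous φ) (hφs : HasCompactSupport φ)
    (hφpos : ∀ x, 0 ≤ φ x) (hfc : Continuous f) (hfpos : ∀ x, 0 < f x)
    (hdc : Continuous d) (x : E) (hA : 0 < ∫ y, φ y * f (x - y)) :
    (∫ y, φ y * d (x - y)) ^ 2
      ≤ (∫ y, φ y * f (x - y)) * ∫ y, φ y * (d (x - y) ^ 2 / f (x - y)) := by
  set A := ∫ y, φ y * f (x - y) with hAdef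
  set B := ∫ y, φ y * d (x - y) with hBdef
  set C := ∫ y, φ y * (d (x - y) ^ 2 / f (x - y)) with hCdef
  have hq : Continuous (fun z => d z ^ 2 / f z) :=
    (hdc.pow 2).div hfc fun z => (hfpos z).ne'
  have hiA := integrable_aux hφc hφs hfc x
  have hiB := integrable_aux hφc hφs hdc x
  have hiC := integrable_aux hφc hφs hq x
  have key : ∀ t : ℝ, 0 ≤ t ^ 2 * A - 2 * t * B + C := by
    intro t
    have h0 : 0 ≤ ∫ y, φ y * ((t * f (x - y) - d (x - y)) ^ 2 / f (x - y)) :=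
      integral_nonneg fun y => mul_nonneg (hφpos y) (div_nonneg (sq_nonneg _) (hfpos _).le)
    have heq : (fun y => φ y * ((t * f (x - y) - d (x - y)) ^ 2 / f (x - y)))
        = fun y => (t ^ 2 * (φ y * f (x - y)) - 2 * t * (φ y * d (x - y)))
            + φ y * (d (x - y) ^ 2 / f (x - y)) := by
      funext y
      have hf0 : f (x - y) ≠ 0 := (hfpos _).ne'
      field_simp
      ring
    rw [heq] at h0
    have i1 : Integrable (fun y => t ^ 2 * (φ y * f (x - y)) - 2 * t * (φ y * d (x - y)))
        volume := (hiA.const_mul _).sub (hiB.const_mul _)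
    rw [integral_add i1 hiC, integral_sub (hiA.const_mul _) (hiB.const_mul _),
      integral_const_mul, integral_const_mul] at h0
    linarith
  have h := key (B / A)
  have hA' : A ≠ 0 := hA.ne'
  have e : (B / A) ^ 2 * A - 2 * (B / A) * B + C = C - B ^ 2 / A := by
    field_simp
    ring
  rw [e] at h
  have h2 : B ^ 2 / A ≤ C := by linarith
  calc B ^ 2 = B ^ 2 / A * A := by field_simp
    _ ≤ C * A := mul_le_mul_of_nonneg_right h2 hA.le
    _ = A * C := mul_comm _ _

lemma lsh_ineq {f : E → ℝ} (hf2 : ContDiff ℝ 2 f) (hfpos : ∀ x, 0 < f x)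
    (hflog : ∀ x, 0 ≤ lap (fun y => Real.log (f y)) x) (z : E) :
    (∑ i, (fderiv ℝ f z (EuclideanSpace.single i 1)) ^ 2) / f z ≤ lap f z := by
  have h := hflog z
  rw [lap_log hf2 hfpos z] at h
  set c := f z with hcdef
  have hc : 0 < c := hfpos z
  set S := ∑ i, (fderiv ℝ f z (EuclideanSpace.single i 1)) ^ 2 with hSdef
  have h2 : S / c ^ 2 ≤ lap f z / c := by linarith
  have h3 : S / c = S / c ^ 2 * c := by
    field_simp
  have h4 : S / c ^ 2 * c ≤ lap f z / c * c := mul_le_mul_of_nonneg_right h2 hc.le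
  rw [div_mul_cancel₀ _ hc.ne'] at h4
  rw [h3]
  exact h4

end Aux

/-- If `f` is log-subharmonic and `φ` is a nonnegative, compactly supported `C^∞` function
with `∫ φ = 1`, then `φ ∗ f` is log-subharmonic. -/
theorem stmt_3 {n : ℕ} (hn : 1 ≤ n) (f φ : EuclideanSpace ℝ (Fin n) → ℝ)
    (hf : IsLSH f) (hφsmooth : ContDiff ℝ (⊤ : ℕ∞) φ) (hφsupp : HasCompactSupport φ)
    (hφpos : ∀ x, 0 ≤ φ x) (hφint : ∫ x, φ x = 1) :
    IsLSH (conv φ f) := by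
  obtain ⟨hf2, hfpos, hflog⟩ := hf
  have hφc : Continuous φ := hφsmooth.continuous
  have hg2 : ContDiff ℝ 2 (conv φ f) := by
    have hconv : conv φ f = MeasureTheory.convolution φ f (ContinuousLinearMap.mul ℝ ℝ) volume := by
      funext x
      rfl
    rw [hconv]
    exact hφsupp.contDiff_convolution_left _ (hφsmooth.of_le (by exact_mod_cast le_top))
      hf2.continuous.locallyIntegrable
  have hgpos : ∀ x, 0 < conv φ f x :=
    conv_pos hφc hφsupp hφpos hφint hf2.continuous hfpos
  refine ⟨hg2, hgpos, fun x => ?_⟩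
  rw [lap_log hg2 hgpos x]
  set g := conv φ f with hgdef
  have hA : 0 < g x := hgpos x
  -- derivative formulas
  have hDi : ∀ v : EuclideanSpace ℝ (Fin n),
      fderiv ℝ g x v = ∫ y, φ y * fderiv ℝ f (x - y) v :=
    fun v => fderiv_conv_apply hφc hφsupp (hf2.of_le one_le_two) x v
  have hlapg : lap g x = ∫ y, φ y * lap f (x - y) := lap_conv hφc hφsupp hf2 x
  have hd : ∀ i : Fin n, Continuous (fun z => fderiv ℝ f z (EuclideanSpace.single i 1)) :=
    fun i => (contDiff_one_dir hf2 _).continuous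
  -- Cauchy-Schwarz for each direction
  have hApos : 0 < ∫ y, φ y * f (x - y) := hgpos x
  have hCS : ∀ i : Fin n,
      (∫ y, φ y * fderiv ℝ f (x - y) (EuclideanSpace.single i 1)) ^ 2
        ≤ (∫ y, φ y * f (x - y))
          * ∫ y, φ y * ((fderiv ℝ f (x - y) (EuclideanSpace.single i 1)) ^ 2 / f (x - y)) :=
    fun i => cs_aux hφc hφsupp hφpos hf2.continuous hfpos (hd i) x hApos
  -- the sum of directional CS terms
  have hstep2 : ∫ y, φ y
        * ((∑ i, (fderiv ℝ f (x - y) (EuclideanSpace.single i 1)) ^ 2) / f (x - y))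
      = ∑ i, ∫ y, φ y * ((fderiv ℝ f (x - y) (EuclideanSpace.single i 1)) ^ 2 / f (x - y)) := by
    rw [← integral_finset_sum]
    · congr 1
      funext y
      rw [Finset.sum_div, Finset.mul_sum]
    · intro i _
      exact integrable_aux hφc hφsupp
        (((hd i).pow 2).div hf2.continuous fun z => (hfpos z).ne') x
  have hQcont : Continuous (fun z =>
      (∑ i, (fderiv ℝ f z (EuclideanSpace.single i 1)) ^ 2) / f z) :=
    (continuous_finset_sum _ fun i _ => (hd i).pow 2).div hf2.continuous
      fun z => (hfpos z).ne'
  have hstep1 : ∫ y, φ y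
        * ((∑ i, (fderiv ℝ f (x - y) (EuclideanSpace.single i 1)) ^ 2) / f (x - y))
      ≤ ∫ y, φ y * lap f (x - y) := by
    apply integral_mono (integrable_aux hφc hφsupp hQcont x)
      (integrable_aux hφc hφsupp (continuous_lap hf2) x)
    intro y
    exact mul_le_mul_of_nonneg_left (lsh_ineq hf2 hfpos hflog (x - y)) (hφpos y)
  have main : (∑ i, (fderiv ℝ g x (EuclideanSpace.single i 1)) ^ 2) ≤ g x * lap g x := by
    calc ∑ i, (fderiv ℝ g x (EuclideanSpace.single i 1)) ^ 2
        = ∑ i, (∫ y, φ y * fderiv ℝ f (x - y) (EuclideanSpace.single i 1)) ^ 2 := by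
          exact Finset.sum_congr rfl fun i _ => by rw [hDi]
      _ ≤ ∑ i, (∫ y, φ y * f (x - y))
            * ∫ y, φ y * ((fderiv ℝ f (x - y) (EuclideanSpace.single i 1)) ^ 2 / f (x - y)) :=
          Finset.sum_le_sum fun i _ => hCS i
      _ = (∫ y, φ y * f (x - y))
            * ∑ i, ∫ y, φ y * ((fderiv ℝ f (x - y) (EuclideanSpace.single i 1)) ^ 2 / f (x - y)) :=
          (Finset.mul_sum _ _ _).symm
      _ ≤ (∫ y, φ y * f (x - y)) * ∫ y, φ y * lap f (x - y) := by
          apply mul_le_mul_of_nonneg_left _ hApos.le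
          rw [← hstep2]
          exact hstep1
      _ = g x * lap g x := by rw [hlapg]; rfl
  have hfinal : (∑ i, (fderiv ℝ g x (EuclideanSpace.single i 1)) ^ 2) / (g x) ^ 2
      ≤ lap g x / g x := by
    rw [div_le_div_iff₀ (by positivity) hA]
    nlinarith [main, hA]
  linarith
end
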